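/- arXiv:2302.00541 — 2 statements merged into one kernel-verified Lean document; each statement's English description precedes it below -/
import Mathlib

section
/- Every formula of dependence logic, inclusion logic, and independence logic is local: for a team T in 𝒜 with domain X ⊇ Fr(φ), we have 𝒜,T ⊨ φ if and only if 𝒜, T↾Fr(φ) ⊨ φ, where T↾Y = {s↾Y : s ∈ T} is the restriction of the team to Y. -/
/-- First-order terms built from variables and function symbols. -/
inductive Term (F V : Type) (arF : F → ℕ) : Type where
  | var : V → Term F V arF
  | func : (f : F) → (Fin (arF f) → Term F V arF) → Term F V arF

/-- Evaluation of a term under an assignment `s`. -/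
def Term.eval {F V A : Type} {arF : F → ℕ} (fI : (f : F) → (Fin (arF f) → A) → A)
    (s : V → A) : Term F V arF → A
  | .var x => s x
  | .func f ts => fI f fun i => (ts i).eval fI s

/-- Variables occurring in a term. -/
def Term.vars {F V : Type} {arF : F → ℕ} : Term F V arF → Set V
  | .var x => {x}
  | .func _ ts => ⋃ i, (ts i).vars

/-- Formulas of first-order logic in negation normal form, extended by
dependence atoms `dep`, inclusion atoms `inc`, and independence atoms `indep`. -/
inductive TForm (R F V : Type) (arR : R → ℕ) (arF : F → ℕ) : Type where
  | eq  : Term F V arF → Term F V arF → TForm R F V arR arF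
  | neq : Term F V arF → Term F V arF → TForm R F V arR arF
  | rel  : (r : R) → (Fin (arR r) → Term F V arF) → TForm R F V arR arF
  | nrel : (r : R) → (Fin (arR r) → Term F V arF) → TForm R F V arR arF
  | dep : List (Term F V arF) → List (Term F V arF) → TForm R F V arR arF
  | inc : List (Term F V arF) → List (Term F V arF) → TForm R F V arR arF
  | indep : List (Term F V arF) → List (Term F V arF) → List (Term F V arF) →
      TForm R F V arR arF
  | and : TForm R F V arR arF → TForm R F V arR arF → TForm R F V arR arF
  | or  : TForm R F V arR arF → TForm R F V arR arF → TForm R F V arR arF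
  | ex  : V → TForm R F V arR arF → TForm R F V arR arF
  | all : V → TForm R F V arR arF → TForm R F V arR arF

/-- A first-order structure: interpretations of relation and function symbols. -/
structure Str (R F : Type) (arR : R → ℕ) (arF : F → ℕ) (A : Type) where
  relI : (r : R) → (Fin (arR r) → A) → Prop
  funI : (f : F) → (Fin (arF f) → A) → A

/-- Evaluation of a tuple (list) of terms. -/
def evalT {R F V A : Type} {arR : R → ℕ} {arF : F → ℕ} (M : Str R F arR arF A)
    (s : V → A) (ts : List (Term F V arF)) : List A :=
  ts.map (Term.eval M.funI s)

/-- Team semantics.  A team is a set of assignments `V → A`.  Disjunction splits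
the team, `∃x` uses a supplementing function into nonempty sets of values, and
`∀x` uses the full supplemented team. -/
def TSat {R F V A : Type} {arR : R → ℕ} {arF : F → ℕ} [DecidableEq V]
    (M : Str R F arR arF A) : TForm R F V arR arF → Set (V → A) → Prop
  | .eq t u, T => ∀ s ∈ T, t.eval M.funI s = u.eval M.funI s
  | .neq t u, T => ∀ s ∈ T, t.eval M.funI s ≠ u.eval M.funI s
  | .rel r ts, T => ∀ s ∈ T, M.relI r fun i => (ts i).eval M.funI s
  | .nrel r ts, T => ∀ s ∈ T, ¬ M.relI r fun i => (ts i).eval M.funI s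
  | .dep ts us, T => ∀ s₁ ∈ T, ∀ s₂ ∈ T,
      evalT M s₁ ts = evalT M s₂ ts → evalT M s₁ us = evalT M s₂ us
  | .inc ts us, T => ∀ s₁ ∈ T, ∃ s₂ ∈ T, evalT M s₁ ts = evalT M s₂ us
  | .indep ts us vs, T => ∀ s₁ ∈ T, ∀ s₂ ∈ T, evalT M s₁ vs = evalT M s₂ vs →
      ∃ s₃ ∈ T, evalT M s₃ vs = evalT M s₁ vs ∧ evalT M s₃ ts = evalT M s₁ ts ∧
        evalT M s₃ us = evalT M s₂ us
  | .and φ ψ, T => TSat M φ T ∧ TSat M ψ T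
  | .or φ ψ, T => ∃ T₁ T₂ : Set (V → A), T₁ ∪ T₂ = T ∧ TSat M φ T₁ ∧ TSat M ψ T₂
  | .ex x φ, T => ∃ f : (V → A) → Set A, (∀ s ∈ T, (f s).Nonempty) ∧
      TSat M φ {s' | ∃ s ∈ T, ∃ a ∈ f s, s' = Function.update s x a}
  | .all x φ, T => TSat M φ {s' | ∃ s ∈ T, ∃ a : A, s' = Function.update s x a}

/-- Classical Tarski semantics (the value on team atoms is irrelevant and set to `True`). -/
def Sat {R F V A : Type} {arR : R → ℕ} {arF : F → ℕ} [DecidableEq V]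
    (M : Str R F arR arF A) : (V → A) → TForm R F V arR arF → Prop
  | s, .eq t u => t.eval M.funI s = u.eval M.funI s
  | s, .neq t u => t.eval M.funI s ≠ u.eval M.funI s
  | s, .rel r ts => M.relI r fun i => (ts i).eval M.funI s
  | s, .nrel r ts => ¬ M.relI r fun i => (ts i).eval M.funI s
  | _, .dep _ _ => True
  | _, .inc _ _ => True
  | _, .indep _ _ _ => True
  | s, .and φ ψ => Sat M s φ ∧ Sat M s ψ
  | s, .or φ ψ => Sat M s φ ∨ Sat M s ψ
  | s, .ex x φ => ∃ a : A, Sat M (Function.update s x a) φ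
  | s, .all x φ => ∀ a : A, Sat M (Function.update s x a) φ

/-- A pure first-order formula: no dependence, inclusion, or independence atoms. -/
def TForm.IsFO {R F V : Type} {arR : R → ℕ} {arF : F → ℕ} :
    TForm R F V arR arF → Prop
  | .dep _ _ => False
  | .inc _ _ => False
  | .indep _ _ _ => False
  | .and φ ψ => φ.IsFO ∧ ψ.IsFO
  | .or φ ψ => φ.IsFO ∧ ψ.IsFO
  | .ex _ φ => φ.IsFO
  | .all _ φ => φ.IsFO
  | _ => True

/-- A dependence logic formula: no inclusion or independence atoms. -/
def TForm.IsDep {R F V : Type} {arR : R → ℕ} {arF : F → ℕ} :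
    TForm R F V arR arF → Prop
  | .inc _ _ => False
  | .indep _ _ _ => False
  | .and φ ψ => φ.IsDep ∧ ψ.IsDep
  | .or φ ψ => φ.IsDep ∧ ψ.IsDep
  | .ex _ φ => φ.IsDep
  | .all _ φ => φ.IsDep
  | _ => True

/-- An inclusion logic formula: no dependence or independence atoms. -/
def TForm.IsInc {R F V : Type} {arR : R → ℕ} {arF : F → ℕ} :
    TForm R F V arR arF → Prop
  | .dep _ _ => False
  | .indep _ _ _ => False
  | .and φ ψ => φ.IsInc ∧ ψ.IsInc
  | .or φ ψ => φ.IsInc ∧ ψ.IsInc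
  | .ex _ φ => φ.IsInc
  | .all _ φ => φ.IsInc
  | _ => True

/-- An independence logic formula: no dependence or inclusion atoms. -/
def TForm.IsInd {R F V : Type} {arR : R → ℕ} {arF : F → ℕ} :
    TForm R F V arR arF → Prop
  | .dep _ _ => False
  | .inc _ _ => False
  | .and φ ψ => φ.IsInd ∧ ψ.IsInd
  | .or φ ψ => φ.IsInd ∧ ψ.IsInd
  | .ex _ φ => φ.IsInd
  | .all _ φ => φ.IsInd
  | _ => True

/-- Variables of a list of terms. -/
def varsL {F V : Type} {arF : F → ℕ} (ts : List (Term F V arF)) : Set V :=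
  ⋃ t ∈ ts, Term.vars t

/-- Free variables of a formula. -/
def TForm.fr {R F V : Type} {arR : R → ℕ} {arF : F → ℕ} :
    TForm R F V arR arF → Set V
  | .eq t u => t.vars ∪ u.vars
  | .neq t u => t.vars ∪ u.vars
  | .rel _ ts => ⋃ i, (ts i).vars
  | .nrel _ ts => ⋃ i, (ts i).vars
  | .dep ts us => varsL ts ∪ varsL us
  | .inc ts us => varsL ts ∪ varsL us
  | .indep ts us vs => varsL ts ∪ varsL us ∪ varsL vs
  | .and φ ψ => φ.fr ∪ ψ.fr
  | .or φ ψ => φ.fr ∪ ψ.fr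
  | .ex x φ => φ.fr \ {x}
  | .all x φ => φ.fr \ {x}

open Classical in
/-- The restriction `T↾X` of a team to a set of variables, realized by setting
all variables outside `X` to the default value. -/
noncomputable def restrictTeam {V A : Type} [Inhabited A] (X : Set V)
    (T : Set (V → A)) : Set (V → A) :=
  (fun s v => if v ∈ X then s v else default) '' T


/-! Satisfaction of a formula only sees a team through the variables `X ⊇ Fr(φ)`: if every
assignment of `T` agrees on `X` with some assignment of `T'` and vice versa, then `T` and `T'`
satisfy the same formulas. This goes by induction on `φ`, moving witnesses along such `X`-twins;
for `∨` the split of `T` is transported to `T'`, and for `∃x` an assignment of `T'` is supplemented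
by all values given to its twins in `T`, which makes the supplemented teams agree on `X ∪ {x}`.
The restriction `T↾Fr(φ)` agrees with `T` on `Fr(φ)` in this sense. -/

open Set Function

theorem Term.eval_congr {F V A : Type} {arF : F → ℕ} (fI : (f : F) → (Fin (arF f) → A) → A)
    {s s' : V → A} : ∀ {t : Term F V arF}, EqOn s s' t.vars → t.eval fI s = t.eval fI s'
  | .var _, h => h rfl
  | .func f ts, h => congrArg (fI f) <| funext fun i =>
      Term.eval_congr fI (h.mono (subset_iUnion (fun i => (ts i).vars) i))

theorem evalT_congr {R F V A : Type} {arR : R → ℕ} {arF : F → ℕ} (M : Str R F arR arF A)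
    {ts : List (Term F V arF)} {s s' : V → A} (h : EqOn s s' (varsL ts)) :
    evalT M s ts = evalT M s' ts :=
  List.map_congr_left fun _ ht => Term.eval_congr M.funI (h.mono (subset_biUnion_of_mem ht))

theorem Term.eval_pi_congr {F V A : Type} {arF : F → ℕ} {n : ℕ}
    (fI : (f : F) → (Fin (arF f) → A) → A) {ts : Fin n → Term F V arF} {s s' : V → A}
    (h : EqOn s s' (⋃ i, (ts i).vars)) :
    (fun i => (ts i).eval fI s) = fun i => (ts i).eval fI s' :=
  funext fun i => Term.eval_congr fI (h.mono (subset_iUnion (fun i => (ts i).vars) i))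

theorem Set.EqOn.update {V A : Type} [DecidableEq V] {X : Set V} {s s' : V → A}
    (h : EqOn s s' X) (x : V) (a : A) :
    EqOn (Function.update s x a) (Function.update s' x a) (insert x X) := by
  intro v hv
  by_cases hvx : v = x
  · subst hvx
    simp only [update_self]
  · simp only [update_of_ne hvx, h (hv.resolve_left hvx)]

def TeamAgreeOn {V A : Type} (X : Set V) (T T' : Set (V → A)) : Prop :=
  (∀ s ∈ T, ∃ s' ∈ T', EqOn s s' X) ∧ ∀ s' ∈ T', ∃ s ∈ T, EqOn s s' X

namespace TeamAgreeOn

variable {R F V A : Type} {arR : R → ℕ} {arF : F → ℕ} {X : Set V} {T T' : Set (V → A)}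

theorem symm (h : TeamAgreeOn X T T') : TeamAgreeOn X T' T :=
  ⟨fun s hs => (h.2 s hs).imp fun _ ⟨hs', e⟩ => ⟨hs', e.symm⟩,
    fun s hs => (h.1 s hs).imp fun _ ⟨hs', e⟩ => ⟨hs', e.symm⟩⟩

theorem forall_mem {P : (V → A) → Prop} (hP : ∀ s s', EqOn s s' X → P s → P s')
    (h : TeamAgreeOn X T T') (hT : ∀ s ∈ T, P s) : ∀ s' ∈ T', P s' := fun s' hs' =>
  let ⟨s, hs, e⟩ := h.2 s' hs'
  hP s s' e (hT s hs)

theorem tsat_dep [DecidableEq V] (M : Str R F arR arF A) {ts us : List (Term F V arF)}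
    (hts : varsL ts ⊆ X) (hus : varsL us ⊆ X) (h : TeamAgreeOn X T T')
    (hT : TSat M (.dep ts us) T) : TSat M (.dep ts us) T' := by
  intro s₁' hs₁' s₂' hs₂' hts'
  obtain ⟨s₁, hs₁, e₁⟩ := h.2 s₁' hs₁'
  obtain ⟨s₂, hs₂, e₂⟩ := h.2 s₂' hs₂'
  have hus' := hT s₁ hs₁ s₂ hs₂ <| by
    rwa [evalT_congr M (e₁.mono hts), evalT_congr M (e₂.mono hts)]
  rwa [evalT_congr M (e₁.mono hus), evalT_congr M (e₂.mono hus)] at hus'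

theorem tsat_inc [DecidableEq V] (M : Str R F arR arF A) {ts us : List (Term F V arF)}
    (hts : varsL ts ⊆ X) (hus : varsL us ⊆ X) (h : TeamAgreeOn X T T')
    (hT : TSat M (.inc ts us) T) : TSat M (.inc ts us) T' := by
  intro s₁' hs₁'
  obtain ⟨s₁, hs₁, e₁⟩ := h.2 s₁' hs₁'
  obtain ⟨s₂, hs₂, heq⟩ := hT s₁ hs₁
  obtain ⟨s₂', hs₂', e₂⟩ := h.1 s₂ hs₂
  exact ⟨s₂', hs₂', by rw [← evalT_congr M (e₁.mono hts), heq, evalT_congr M (e₂.mono hus)]⟩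

theorem tsat_indep [DecidableEq V] (M : Str R F arR arF A) {ts us vs : List (Term F V arF)}
    (hts : varsL ts ⊆ X) (hus : varsL us ⊆ X) (hvs : varsL vs ⊆ X) (h : TeamAgreeOn X T T')
    (hT : TSat M (.indep ts us vs) T) : TSat M (.indep ts us vs) T' := by
  intro s₁' hs₁' s₂' hs₂' hvs'
  obtain ⟨s₁, hs₁, e₁⟩ := h.2 s₁' hs₁'
  obtain ⟨s₂, hs₂, e₂⟩ := h.2 s₂' hs₂'
  obtain ⟨s₃, hs₃, h₃v, h₃t, h₃u⟩ := hT s₁ hs₁ s₂ hs₂ <| by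
    rwa [evalT_congr M (e₁.mono hvs), evalT_congr M (e₂.mono hvs)]
  obtain ⟨s₃', hs₃', e₃⟩ := h.1 s₃ hs₃
  refine ⟨s₃', hs₃', ?_, ?_, ?_⟩
  · rw [← evalT_congr M (e₃.mono hvs), h₃v, evalT_congr M (e₁.mono hvs)]
  · rw [← evalT_congr M (e₃.mono hts), h₃t, evalT_congr M (e₁.mono hts)]
  · rw [← evalT_congr M (e₃.mono hus), h₃u, evalT_congr M (e₂.mono hus)]

theorem subteam (h : TeamAgreeOn X T T') {T₁ : Set (V → A)} (h₁ : T₁ ⊆ T) :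
    TeamAgreeOn X T₁ {s' ∈ T' | ∃ s ∈ T₁, EqOn s s' X} :=
  ⟨fun s hs => (h.1 s (h₁ hs)).imp fun _ ⟨hs', e⟩ => ⟨⟨hs', s, hs, e⟩, e⟩,
    fun _ ⟨_, hs⟩ => hs⟩

theorem union_subteam (h : TeamAgreeOn X T T') {T₁ T₂ : Set (V → A)} (hT : T₁ ∪ T₂ = T) :
    {s' ∈ T' | ∃ s ∈ T₁, EqOn s s' X} ∪ {s' ∈ T' | ∃ s ∈ T₂, EqOn s s' X} = T' := by
  refine Subset.antisymm (union_subset (sep_subset _ _) (sep_subset _ _)) fun s' hs' => ?_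
  obtain ⟨s, hs, e⟩ := h.2 s' hs'
  rw [← hT] at hs
  exact hs.imp (fun hs => ⟨hs', s, hs, e⟩) fun hs => ⟨hs', s, hs, e⟩

/-- An assignment of `T'` is offered every value that `f` offers one of its `X`-twins in `T`. -/
theorem supplement [DecidableEq V] (h : TeamAgreeOn X T T') (x : V) (f : (V → A) → Set A) :
    TeamAgreeOn (insert x X) {t | ∃ s ∈ T, ∃ a ∈ f s, t = Function.update s x a}
      {t | ∃ s' ∈ T', ∃ a ∈ {a | ∃ s ∈ T, EqOn s s' X ∧ a ∈ f s},
        t = Function.update s' x a} := by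
  constructor
  · rintro _ ⟨s, hs, a, ha, rfl⟩
    obtain ⟨s', hs', e⟩ := h.1 s hs
    exact ⟨_, ⟨s', hs', a, ⟨s, hs, e, ha⟩, rfl⟩, e.update x a⟩
  · rintro _ ⟨s', -, a, ⟨s, hs, e, ha⟩, rfl⟩
    exact ⟨_, ⟨s, hs, a, ha, rfl⟩, e.update x a⟩

theorem supplement_univ [DecidableEq V] (h : TeamAgreeOn X T T') (x : V) :
    TeamAgreeOn (insert x X) {t | ∃ s ∈ T, ∃ a : A, t = Function.update s x a}
      {t | ∃ s' ∈ T', ∃ a : A, t = Function.update s' x a} := by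
  constructor
  · rintro _ ⟨s, hs, a, rfl⟩
    obtain ⟨s', hs', e⟩ := h.1 s hs
    exact ⟨_, ⟨s', hs', a, rfl⟩, e.update x a⟩
  · rintro _ ⟨s', hs', a, rfl⟩
    obtain ⟨s, hs, e⟩ := h.2 s' hs'
    exact ⟨_, ⟨s, hs, a, rfl⟩, e.update x a⟩

end TeamAgreeOn

theorem TSat.of_teamAgreeOn {R F V A : Type} {arR : R → ℕ} {arF : F → ℕ} [DecidableEq V]
    (M : Str R F arR arF A) {φ : TForm R F V arR arF} {X : Set V} (hX : φ.fr ⊆ X)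
    {T T' : Set (V → A)} (h : TeamAgreeOn X T T') (hT : TSat M φ T) : TSat M φ T' := by
  induction φ generalizing X T T' with
  | eq t u =>
    refine h.forall_mem (fun s s' e hs => ?_) hT
    rwa [← Term.eval_congr M.funI (e.mono (subset_union_left.trans hX)),
      ← Term.eval_congr M.funI (e.mono (subset_union_right.trans hX))]
  | neq t u =>
    refine h.forall_mem (fun s s' e hs => ?_) hT
    rwa [← Term.eval_congr M.funI (e.mono (subset_union_left.trans hX)),
      ← Term.eval_congr M.funI (e.mono (subset_union_right.trans hX))]
  | rel r ts =>
    exact h.forall_mem (fun s s' e => by rw [Term.eval_pi_congr M.funI (e.mono hX)]; exact id) hT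
  | nrel r ts =>
    exact h.forall_mem (fun s s' e => by rw [Term.eval_pi_congr M.funI (e.mono hX)]; exact id) hT
  | dep ts us => exact h.tsat_dep M (subset_union_left.trans hX) (subset_union_right.trans hX) hT
  | inc ts us => exact h.tsat_inc M (subset_union_left.trans hX) (subset_union_right.trans hX) hT
  | indep ts us vs =>
    exact h.tsat_indep M (subset_union_left.trans (subset_union_left.trans hX))
      (subset_union_right.trans (subset_union_left.trans hX)) (subset_union_right.trans hX) hT
  | and φ ψ ihφ ihψ =>
    exact ⟨ihφ (subset_union_left.trans hX) h hT.1, ihψ (subset_union_right.trans hX) h hT.2⟩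
  | or φ ψ ihφ ihψ =>
    obtain ⟨T₁, T₂, hT, h₁, h₂⟩ := hT
    exact ⟨_, _, h.union_subteam hT,
      ihφ (subset_union_left.trans hX) (h.subteam (hT ▸ subset_union_left)) h₁,
      ihψ (subset_union_right.trans hX) (h.subteam (hT ▸ subset_union_right)) h₂⟩
  | ex x φ ih =>
    obtain ⟨f, hf, hφ⟩ := hT
    refine ⟨_, fun s' hs' => ?_, ih (sdiff_subset_iff.1 hX) (h.supplement x f) hφ⟩
    obtain ⟨s, hs, e⟩ := h.2 s' hs'
    exact (hf s hs).imp fun a ha => ⟨s, hs, e, ha⟩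
  | all x φ ih => exact ih (sdiff_subset_iff.1 hX) (h.supplement_univ x) hT

theorem teamAgreeOn_restrictTeam {V A : Type} [Inhabited A] (X : Set V) (T : Set (V → A)) :
    TeamAgreeOn X T (restrictTeam X T) := by
  refine ⟨fun s hs => ⟨_, mem_image_of_mem _ hs, fun v hv => ?_⟩, ?_⟩
  · simp only [if_pos hv]
  · rintro _ ⟨s, hs, rfl⟩
    exact ⟨s, hs, fun v hv => by simp only [if_pos hv]⟩

/-- Locality. Every formula of dependence, inclusion, and independence
logic (i.e. every formula of the common extension) satisfies
`𝒜,T ⊨ φ ↔ 𝒜,T↾Fr(φ) ⊨ φ`. -/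
theorem locality {R F V A : Type} {arR : R → ℕ} {arF : F → ℕ} [DecidableEq V] [Inhabited A]
    (M : Str R F arR arF A) (φ : TForm R F V arR arF) (T : Set (V → A)) :
    TSat M φ T ↔ TSat M φ (restrictTeam φ.fr T) :=
  ⟨TSat.of_teamAgreeOn M subset_rfl (teamAgreeOn_restrictTeam φ.fr T),
    TSat.of_teamAgreeOn M subset_rfl (teamAgreeOn_restrictTeam φ.fr T).symm⟩
end

section
/- Let G = (V,E) be a finite graph and let φ(z) := ∀x ∃y (y ⊆ z ∧ (E(x,y) ∨ x = y)) be the inclusion logic formula with single free variable z. Then for every k ≥ 1: G has a dominating set of size k if and only if there exists a team T with domain {z}, |T| = k, and G,T ⊨ φ. -/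
/-- The structure corresponding to a graph: one binary relation symbol. -/
def graphStr {V : Type} (E : V → V → Prop) :
    Str Unit Empty (fun _ => 2) (fun e => e.elim) V :=
  ⟨fun _ v => E (v 0) (v 1), fun e => e.elim⟩

/-- The inclusion logic formula `φ(z) := ∀x ∃y (y ⊆ z ∧ (E(x,y) ∨ x = y))`
(variables `z = 0`, `x = 1`, `y = 2`). -/
def domForm : TForm Unit Empty (Fin 3) (fun _ => 2) (fun e => e.elim) :=
  .all 1 (.ex 2 (.and (.inc [.var 2] [.var 0])
    (.or (.rel () ![.var 1, .var 2]) (.eq (.var 1) (.var 2)))))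

/-!
A team with domain `{z}` is determined by the set `Z` of its `z`-values. In `∀x ∃y`, the
supplementing function picks for every vertex `x` candidates `y`; the inclusion atom `y ⊆ z`
forces them into `Z`, and the disjunction, being first-order and hence flat, asks that each is
`x` itself or a neighbour of `x`. So `Z` is dominating, and conversely a dominating set gives the
supplementing function `x ↦ {a dominator of x}`.
-/

open Set

section TeamSemantics

variable {R F V A : Type} {arR : R → ℕ} {arF : F → ℕ} [DecidableEq V]

/-- The team `T[f/x]`. -/
def Team.supplement (T : Set (V → A)) (x : V) (f : (V → A) → Set A) : Set (V → A) :=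
  {s' | ∃ s ∈ T, ∃ a ∈ f s, s' = Function.update s x a}

theorem Team.update_mem_supplement {T : Set (V → A)} {x : V} {f : (V → A) → Set A}
    {s : V → A} {a : A} (hs : s ∈ T) (ha : a ∈ f s) :
    Function.update s x a ∈ Team.supplement T x f :=
  ⟨s, hs, a, ha, rfl⟩

theorem Team.image_supplement {T : Set (V → A)} {x z : V} {f : (V → A) → Set A}
    (hzx : z ≠ x) (hf : ∀ s ∈ T, (f s).Nonempty) :
    (· z) '' Team.supplement T x f = (· z) '' T := by
  ext b
  constructor
  · rintro ⟨_, ⟨s, hs, a, -, rfl⟩, rfl⟩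
    exact ⟨s, hs, by simp [hzx]⟩
  · rintro ⟨s, hs, rfl⟩
    obtain ⟨a, ha⟩ := hf s hs
    exact ⟨_, Team.update_mem_supplement hs ha, by simp [hzx]⟩

theorem tSat_ex_iff {M : Str R F arR arF A} {x : V} {φ : TForm R F V arR arF}
    {T : Set (V → A)} :
    TSat M (.ex x φ) T ↔
      ∃ f : (V → A) → Set A, (∀ s ∈ T, (f s).Nonempty) ∧ TSat M φ (Team.supplement T x f) :=
  Iff.rfl

theorem tSat_all_iff {M : Str R F arR arF A} {x : V} {φ : TForm R F V arR arF}
    {T : Set (V → A)} :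
    TSat M (.all x φ) T ↔ TSat M φ (Team.supplement T x fun _ => univ) := by
  simp [TSat, Team.supplement]

theorem tSat_inc_var_iff {M : Str R F arR arF A} {y z : V} {T : Set (V → A)} :
    TSat M (.inc [.var y] [.var z]) T ↔ (· y) '' T ⊆ (· z) '' T := by
  rw [image_subset_iff]
  simp only [TSat, evalT, List.map, Term.eval, List.cons.injEq, and_true, subset_def,
    mem_preimage, mem_image, eq_comm]

/-- Flatness of first-order formulas. -/
theorem tSat_iff_forall_sat {M : Str R F arR arF A} {φ : TForm R F V arR arF}
    (hφ : φ.IsFO) {T : Set (V → A)} : TSat M φ T ↔ ∀ s ∈ T, Sat M s φ := by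
  induction φ generalizing T with
  | eq | neq | rel | nrel => rfl
  | dep | inc | indep => exact hφ.elim
  | and φ ψ ihφ ihψ =>
    simp only [TSat, Sat, ihφ hφ.1, ihψ hφ.2, ← forall₂_and]
  | or φ ψ ihφ ihψ =>
    simp only [TSat, Sat, ihφ hφ.1, ihψ hφ.2]
    constructor
    · rintro ⟨T₁, T₂, rfl, h₁, h₂⟩ s (hs | hs)
      exacts [.inl (h₁ s hs), .inr (h₂ s hs)]
    · intro h
      refine ⟨{s ∈ T | Sat M s φ}, {s ∈ T | Sat M s ψ}, ?_, fun s hs ↦ hs.2, fun s hs ↦ hs.2⟩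
      ext s
      simp only [mem_union, mem_ofPred_eq, ← and_or_left]
      exact ⟨fun h' ↦ h'.1, fun hs ↦ ⟨hs, h s hs⟩⟩
  | ex x φ ih =>
    simp only [tSat_ex_iff, ih hφ, Sat, Team.supplement, mem_ofPred_eq]
    constructor
    · rintro ⟨f, hf, h⟩ s hs
      obtain ⟨a, ha⟩ := hf s hs
      exact ⟨a, h _ ⟨s, hs, a, ha, rfl⟩⟩
    · intro h
      refine ⟨fun s ↦ {a | Sat M (Function.update s x a) φ}, h, ?_⟩
      rintro _ ⟨s, -, a, ha, rfl⟩
      exact ha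
  | all x φ ih =>
    simp only [tSat_all_iff, ih hφ, Sat, Team.supplement, mem_univ, true_and]
    constructor
    · exact fun h s hs a ↦ h _ ⟨s, hs, a, rfl⟩
    · rintro h _ ⟨s, hs, a, rfl⟩
      exact h s hs a

end TeamSemantics

def IsDominating {V : Type} (E : V → V → Prop) (S : Set V) : Prop :=
  ∀ v ∉ S, ∃ u ∈ S, E v u

theorem isDominating_iff_forall_exists_adj_or_eq {V : Type} {E : V → V → Prop} {S : Set V} :
    IsDominating E S ↔ ∀ v, ∃ u ∈ S, E v u ∨ v = u := by
  refine ⟨fun h v ↦ ?_, fun h v hv ↦ ?_⟩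
  · by_cases hv : v ∈ S
    · exact ⟨v, hv, .inr rfl⟩
    · obtain ⟨u, hu, huv⟩ := h v hv
      exact ⟨u, hu, .inl huv⟩
  · obtain ⟨u, hu, huv | rfl⟩ := h v
    exacts [⟨u, hu, huv⟩, (hv hu).elim]

theorem tSat_domForm_iff {V : Type} {E : V → V → Prop} {T : Set (Fin 3 → V)}
    (hT : T.Nonempty) : TSat (graphStr E) domForm T ↔ IsDominating E ((· 0) '' T) := by
  set T₁ := Team.supplement T 1 fun _ => univ
  have hZ₁ : (· 0) '' T₁ = (· 0) '' T :=
    Team.image_supplement (by decide) fun s _ ↦ ⟨s 0, trivial⟩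
  have hflat : (TForm.or (.rel () ![.var 1, .var 2]) (.eq (.var 1) (.var 2)) :
      TForm Unit Empty (Fin 3) (fun _ => 2) (fun e => e.elim)).IsFO := ⟨trivial, trivial⟩
  rw [domForm, tSat_all_iff, tSat_ex_iff]
  change (∃ f, (∀ s ∈ T₁, (f s).Nonempty) ∧
    TSat (graphStr E) (.inc [.var 2] [.var 0]) (Team.supplement T₁ 2 f) ∧
    TSat (graphStr E) (.or _ _) (Team.supplement T₁ 2 f)) ↔ _
  simp only [tSat_inc_var_iff, tSat_iff_forall_sat hflat, isDominating_iff_forall_exists_adj_or_eq]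
  constructor
  · rintro ⟨f, hf, hinc, hadj⟩ v
    obtain ⟨s, hs⟩ := hT
    have hs₁ : Function.update s 1 v ∈ T₁ := Team.update_mem_supplement hs trivial
    obtain ⟨a, ha⟩ := hf _ hs₁
    have hs₂ := Team.update_mem_supplement (x := 2) hs₁ ha
    refine ⟨a, ?_, by simpa [Sat, graphStr, Term.eval] using hadj _ hs₂⟩
    rw [← hZ₁, ← Team.image_supplement (z := 0) (x := 2) (by decide) hf]
    exact hinc ⟨_, hs₂, by simp⟩
  · intro h
    choose d hdZ hd using h
    have hf : ∀ s ∈ T₁, ({d (s 1)} : Set V).Nonempty := fun _ _ ↦ singleton_nonempty _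
    refine ⟨fun s ↦ {d (s 1)}, hf, ?_, ?_⟩
    · rw [Team.image_supplement (z := 0) (by decide) hf, hZ₁]
      rintro _ ⟨_, ⟨s, -, a, rfl, rfl⟩, rfl⟩
      simpa using hdZ (s 1)
    · rintro _ ⟨s, -, a, rfl, rfl⟩
      simpa [Sat, graphStr, Term.eval] using hd (s 1)

theorem dominatingSet_iff_team_general {V : Type} (E : V → V → Prop) (k : ℕ) (hk : 1 ≤ k) :
    (∃ S : Finset V, S.card = k ∧ ∀ v : V, v ∉ S → ∃ u ∈ S, E v u) ↔
    (∃ T : Finset (Fin 3 → V), (∀ s ∈ T, ∀ v : Fin 3, s v = s 0) ∧ T.card = k ∧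
      TSat (graphStr E) domForm (↑T : Set (Fin 3 → V))) := by
  constructor
  · rintro ⟨S, rfl, hS⟩
    let T : Finset (Fin 3 → V) := S.map ⟨Function.const _, Function.const_injective⟩
    have hT : (T : Set (Fin 3 → V)).Nonempty := by simpa [T, Finset.card_pos] using hk
    refine ⟨T, by simp [T], Finset.card_map _, (tSat_domForm_iff hT).2 ?_⟩
    simpa [T, IsDominating, image_image] using hS
  · rintro ⟨T, hconst, rfl, hsat⟩
    classical
    have hT : (T : Set (Fin 3 → V)).Nonempty := by simpa [Finset.card_pos] using hk
    have hinj : Set.InjOn (· 0) (T : Set (Fin 3 → V)) := fun s hs t ht hst ↦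
      funext fun v ↦ (hconst s hs v).trans (hst.trans (hconst t ht v).symm)
    refine ⟨T.image (· 0), Finset.card_image_of_injOn hinj, ?_⟩
    simpa [IsDominating] using (tSat_domForm_iff hT).1 hsat

/-- For k ≥ 1, a finite graph has a dominating set of size k iff
`∀x ∃y (y ⊆ z ∧ (E(x,y) ∨ x = y))` has a satisfying team of size k with domain {z}.
Teams with domain `{z}` are represented by teams of constant assignments. -/
theorem dominatingSet_iff_team {V : Type} [Fintype V] [DecidableEq V] (E : V → V → Prop)
    (hsymm : Symmetric E) (k : ℕ) (hk : 1 ≤ k) :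
    (∃ S : Finset V, S.card = k ∧ ∀ v : V, v ∉ S → ∃ u ∈ S, E v u) ↔
    (∃ T : Finset (Fin 3 → V), (∀ s ∈ T, ∀ v : Fin 3, s v = s 0) ∧ T.card = k ∧
      TSat (graphStr E) domForm (↑T : Set (Fin 3 → V))) :=
  dominatingSet_iff_team_general E k hk
end
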